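/- Suppose μ is regular, κ and θ are cardinals, and I is a μ-complete ideal on κ containing all subsets of κ of size < κ, such that there is a dense embedding e : Add(μ,θ) → P(κ)/I and there is a subfamily J ⊆ I of cardinality ≤ θ that is ⊆-cofinal in I. Then there exists a (μ,κ)-densely maximal independent family F ⊆ P(κ) of cardinality θ with I = I_F. In particular θ ∈ sp_i(μ,κ). -/

import Mathlib

open Cardinal Set

universe u

/-- A condition of the Cohen forcing `Add(μ, I)`: a pair of disjoint subsets of the
index set `I`, both of cardinality `< μ` (the positive and negative coordinates of a
partial function `I → 2` of size `< μ`). -/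
structure AddCond (μ : Cardinal.{u}) (I : Type u) where
  pos : Set I
  neg : Set I
  disj : Disjoint pos neg
  posSmall : #pos < μ
  negSmall : #neg < μ

/-- `q` extends (is stronger than) `p`. -/
def AddLe {μ : Cardinal.{u}} {I : Type u} (q p : AddCond μ I) : Prop :=
  p.pos ⊆ q.pos ∧ p.neg ⊆ q.neg

/-- The Boolean combination of the family `f` coded by the condition `p`:
`X_p = ⋂_{i ∈ pos} f i \ ⋃_{i ∈ neg} f i`. -/
def XInd {μ : Cardinal.{u}} {I : Type u} {S : Type u} (f : I → Set S)
    (p : AddCond μ I) : Set S :=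
  (⋂ i ∈ p.pos, f i) \ ⋃ i ∈ p.neg, f i

/-- The density ideal of the family `f`: `Y` belongs to it iff the set of conditions
`p` with `X_p ∩ Y = ∅` is dense in `Add(μ, I)`. -/
def densityIdeal {I : Type u} {S : Type u} (μ : Cardinal.{u}) (f : I → Set S) :
    Set (Set S) :=
  {Y | ∀ p : AddCond μ I, ∃ q : AddCond μ I, AddLe q p ∧ XInd f q ∩ Y = ∅}

/-!
Work modulo `I`, i.e. with the dual filter `l`, which is `μ`-complete. Enumerate `J` as
`f : T → J` so that every member of `J` recurs outside every set of fewer than `μ` indices, and put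
`A α = e({α ↦ 1}) \ f α`. Since each `f α` is null, a Boolean combination `X_p` of the `A α` agrees
modulo `I` with the same combination of the `e({α ↦ 1})`, and density of `e` identifies that with
`e p`. So every `X_p` is `I`-positive, and density of `e` gives dense maximality and `I_F ⊆ I`.
Conversely a null `Y` lies inside `f α` for some `α` not mentioned by `p`, and adding `α ↦ 1` to
`p` gives an extension whose `X` misses `Y`; this gives `I ⊆ I_F`.
-/
open Filter

namespace AddCond

variable {μ : Cardinal.{u}} {T : Type u}

def Compatible (p q : AddCond μ T) : Prop :=
  ∃ r, AddLe r p ∧ AddLe r q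

def ofFinite (hμ : ℵ₀ ≤ μ) (s t : Set T) (hs : s.Finite) (ht : t.Finite) (hst : Disjoint s t) :
    AddCond μ T :=
  ⟨s, t, hst, hs.lt_aleph0.trans_le hμ, ht.lt_aleph0.trans_le hμ⟩

def single (hμ : ℵ₀ ≤ μ) (α : T) : AddCond μ T :=
  ofFinite hμ {α} ∅ (finite_singleton α) finite_empty (disjoint_empty _)

def sup (hμ : ℵ₀ ≤ μ) (p q : AddCond μ T) (h₁ : Disjoint p.pos q.neg)
    (h₂ : Disjoint q.pos p.neg) : AddCond μ T where
  pos := p.pos ∪ q.pos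
  neg := p.neg ∪ q.neg
  disj := disjoint_union_left.2
    ⟨disjoint_union_right.2 ⟨p.disj, h₁⟩, disjoint_union_right.2 ⟨h₂, q.disj⟩⟩
  posSmall := (mk_union_le _ _).trans_lt (add_lt_of_lt hμ p.posSmall q.posSmall)
  negSmall := (mk_union_le _ _).trans_lt (add_lt_of_lt hμ p.negSmall q.negSmall)

variable {hμ : ℵ₀ ≤ μ} {p q r : AddCond μ T}

theorem le_sup_left {h₁ h₂} : AddLe (sup hμ p q h₁ h₂) p :=
  ⟨subset_union_left, subset_union_left⟩

theorem le_sup_right {h₁ h₂} : AddLe (sup hμ p q h₁ h₂) q :=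
  ⟨subset_union_right, subset_union_right⟩

theorem _root_.AddLe.trans (hqr : AddLe q r) (hrp : AddLe r p) : AddLe q p :=
  ⟨hrp.1.trans hqr.1, hrp.2.trans hqr.2⟩

theorem compatible_iff (hμ : ℵ₀ ≤ μ) :
    Compatible p q ↔ Disjoint p.pos q.neg ∧ Disjoint q.pos p.neg := by
  refine ⟨fun ⟨r, hrp, hrq⟩ => ⟨r.disj.mono hrp.1 hrq.2, r.disj.mono hrq.1 hrp.2⟩,
    fun ⟨h₁, h₂⟩ => ⟨sup hμ p q h₁ h₂, le_sup_left, le_sup_right⟩⟩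

theorem addLe_single {α : T} (h : α ∈ p.pos) : AddLe p (single hμ α) :=
  ⟨singleton_subset_iff.2 h, empty_subset _⟩

theorem not_compatible_single {α : T} (h : α ∈ p.neg) : ¬Compatible p (single hμ α) :=
  fun ⟨r, hrp, hrα⟩ => disjoint_left.1 r.disj (hrα.1 rfl) (hrp.2 h)

end AddCond

open AddCond

section XInd

variable {μ : Cardinal.{u}} {T S : Type u} {g : T → Set S} {p q : AddCond μ T}

theorem XInd_anti (h : AddLe q p) : XInd g q ⊆ XInd g p :=
  sdiff_subset_sdiff (biInter_subset_biInter_left h.1) (biUnion_subset_biUnion_left h.2)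

theorem XInd_sup {hμ : ℵ₀ ≤ μ} {h₁ h₂} : XInd g (sup hμ p q h₁ h₂) = XInd g p ∩ XInd g q := by
  ext x
  simp only [XInd, sup, Set.mem_sdiff, mem_inter_iff, mem_iInter, mem_iUnion, mem_union, or_imp,
    forall_and, exists_prop, not_exists, not_and]
  tauto

theorem XInd_single {hμ : ℵ₀ ≤ μ} {α : T} : XInd g (single hμ α) = g α := by
  simp [XInd, single, ofFinite]

end XInd

theorem Filter.eventually_notMem_ofCardinalUnion_iff {S : Type u} {c : Cardinal.{u}}
    {I : Set (Set S)} {hc hunion hmono} {Y : Set S} :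
    (∀ᶠ x in ofCardinalUnion (c := c) I hc hunion hmono, x ∉ Y) ↔ Y ∈ I := by
  change Yᶜ ∈ _ ↔ _
  rw [mem_ofCardinalUnion, compl_compl]
  rfl

theorem Filter.eventuallyLE_iff_eventually_notMem_sdiff {S : Type u} {l : Filter S}
    {A B : Set S} : A ≤ᶠ[l] B ↔ ∀ᶠ x in l, x ∉ A \ B :=
  eventually_congr (.of_forall fun _ => not_and_not_right.symm)

theorem le_mk_of_forall_exists_mem {S : Type u} {μ : Cardinal.{u}} {l : Filter S}
    [CardinalInterFilter l μ] [l.NeBot] {J : Set (Set S)} (hJ : ∀ Z ∈ J, ∀ᶠ x in l, x ∉ Z)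
    (hcover : ∀ x, ∃ Z ∈ J, x ∈ Z) : μ ≤ #J := by
  by_contra! h
  obtain ⟨x, hx⟩ := ((eventually_cardinal_ball h).2 hJ).exists
  obtain ⟨Z, hZ, hxZ⟩ := hcover x
  exact hx Z hZ hxZ

theorem exists_forall_exists_notMem_eq {α β : Type u} [Nonempty β] {μ : Cardinal.{u}}
    (hα : ℵ₀ ≤ #α) (hβα : #β ≤ #α) (hμα : μ ≤ #α) :
    ∃ f : α → β, ∀ b (P : Set α), #P < μ → ∃ a ∉ P, f a = b := by
  have hprod : #(β × α) = #α := by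
    rw [mk_prod, lift_id, lift_id, mul_eq_right hα hβα (mk_ne_zero β)]
  obtain ⟨E⟩ := Cardinal.eq.1 hprod.symm
  refine ⟨fun a => (E a).1, fun b P hP => ?_⟩
  by_contra! h
  have hmem : ∀ a, E.symm (b, a) ∈ P := fun a => by_contra fun ha => h _ ha (by simp)
  have hinj : Function.Injective fun a => (⟨E.symm (b, a), hmem a⟩ : P) := fun a₁ a₂ h12 => by
    simpa using congrArg Subtype.val h12
  exact (hP.trans_le hμα).not_ge (mk_le_of_injective hinj)

section DenseEmbedding

variable {μ : Cardinal.{u}} {T S : Type u} {l : Filter S}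

/-- `e` induces a dense embedding of `Add(μ, T)` into `𝒫(S)` modulo the ideal dual to `l`. -/
structure IsDenseEmbeddingMod (l : Filter S) (e : AddCond μ T → Set S) : Prop where
  frequently_mem : ∀ p, ∃ᶠ x in l, x ∈ e p
  le_of_addLe : ∀ {p q}, AddLe q p → e q ≤ᶠ[l] e p
  eventually_notMem_inter : ∀ {p q}, ¬Compatible p q → ∀ᶠ x in l, x ∉ e p ∩ e q
  exists_le : ∀ {Y : Set S}, (∃ᶠ x in l, x ∈ Y) → ∃ p, e p ≤ᶠ[l] Y

variable {e : AddCond μ T → Set S}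

namespace IsDenseEmbeddingMod

theorem XInd_single_le (he : IsDenseEmbeddingMod l e) (hμ : ℵ₀ ≤ μ) (p : AddCond μ T) :
    XInd (fun α => e (single hμ α)) p ≤ᶠ[l] e p := by
  set D := XInd (fun α => e (single hμ α)) p
  by_contra h
  obtain ⟨r, hr⟩ := he.exists_le (Y := D \ e p)
    ((not_eventually.1 h).mono fun _ => Classical.not_imp.1)
  suffices ∃ s, ∀ᶠ x in l, x ∉ e s by
    obtain ⟨s, hs⟩ := this
    exact he.frequently_mem s hs
  by_cases hrp : Compatible r p
  · obtain ⟨s, hsr, hsp⟩ := hrp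
    refine ⟨s, ?_⟩
    filter_upwards [(he.le_of_addLe hsr).trans hr, he.le_of_addLe hsp] with x h₁ h₂ hx
    exact (h₁ hx).2 (h₂ hx)
  rw [compatible_iff hμ, not_and_or, not_disjoint_iff, not_disjoint_iff] at hrp
  refine ⟨r, ?_⟩
  rcases hrp with ⟨β, hβr, hβp⟩ | ⟨α, hαp, hαr⟩
  · filter_upwards [hr, he.le_of_addLe (addLe_single (hμ := hμ) hβr)] with x h₁ h₂ hx
    exact (h₁ hx).1.2 (mem_biUnion hβp (h₂ hx))
  · filter_upwards [hr, he.eventually_notMem_inter (not_compatible_single (hμ := hμ) hαr)]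
      with x h₁ h₂ hx
    exact h₂ ⟨hx, mem_iInter₂.1 (h₁ hx).1.1 α hαp⟩

theorem le_XInd_single [CardinalInterFilter l μ] (he : IsDenseEmbeddingMod l e) (hμ : ℵ₀ ≤ μ)
    (p : AddCond μ T) : e p ≤ᶠ[l] XInd (fun α => e (single hμ α)) p := by
  have hpos : ∀ᶠ x in l, ∀ α ∈ p.pos, x ∈ e p → x ∈ e (single hμ α) :=
    (eventually_cardinal_ball p.posSmall).2 fun α hα => he.le_of_addLe (addLe_single hα)
  have hneg : ∀ᶠ x in l, ∀ β ∈ p.neg, x ∉ e p ∩ e (single hμ β) :=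
    (eventually_cardinal_ball p.negSmall).2 fun β hβ =>
      he.eventually_notMem_inter (not_compatible_single hβ)
  filter_upwards [hpos, hneg] with x h₁ h₂ hx
  exact ⟨mem_iInter₂.2 fun α hα => h₁ α hα hx, by simpa using fun β hβ hxβ => h₂ β hβ ⟨hx, hxβ⟩⟩

end IsDenseEmbeddingMod

theorem XInd_eventuallyEq [CardinalInterFilter l μ] {f g : T → Set S} (h : ∀ α, f α =ᶠ[l] g α)
    (p : AddCond μ T) : XInd f p =ᶠ[l] XInd g p :=
  (EventuallyEq.cardinal_bInter p.posSmall fun α _ => h α).diff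
    (EventuallyEq.cardinal_bUnion p.negSmall fun β _ => h β)

theorem IsDenseEmbeddingMod.XInd_diff_eventuallyEq [CardinalInterFilter l μ]
    (he : IsDenseEmbeddingMod l e) (hμ : ℵ₀ ≤ μ) {f : T → Set S} (hf : ∀ α, ∀ᶠ x in l, x ∉ f α)
    (p : AddCond μ T) : XInd (fun α => e (single hμ α) \ f α) p =ᶠ[l] e p := by
  refine (XInd_eventuallyEq (fun α => ?_) p).trans
    ((he.le_XInd_single hμ p).antisymm (he.XInd_single_le hμ p)).symm
  filter_upwards [hf α] with x hx
  exact propext (and_iff_left hx)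

end DenseEmbedding

section Representation

variable {μ : Cardinal.{u}} {T S : Type u} {l : Filter S} {e : AddCond μ T → Set S}
  {g : T → Set S}

theorem frequently_mem_XInd (he : IsDenseEmbeddingMod l e) (hg : ∀ p, XInd g p =ᶠ[l] e p)
    (p : AddCond μ T) : ∃ᶠ x in l, x ∈ XInd g p :=
  (he.frequently_mem p).mp ((hg p).mem_iff.mono fun _ hx => hx.2)

theorem mk_XInd (he : IsDenseEmbeddingMod l e) (hg : ∀ p, XInd g p =ᶠ[l] e p)
    (hsmall : ∀ Y : Set S, #Y < #S → ∀ᶠ x in l, x ∉ Y) (p : AddCond μ T) :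
    #(XInd g p) = #S :=
  (mk_set_le _).antisymm (not_lt.1 fun h => frequently_mem_XInd he hg p (hsmall _ h))

theorem injective_of_XInd_eventuallyEq (hμ : ℵ₀ ≤ μ) (he : IsDenseEmbeddingMod l e)
    (hg : ∀ p, XInd g p =ᶠ[l] e p) : Function.Injective g := by
  intro α β hαβ
  by_contra hne
  have := frequently_mem_XInd he hg
    (ofFinite hμ {α} {β} (finite_singleton α) (finite_singleton β) (by simpa using hne))
  simp [XInd, ofFinite, hαβ] at this

theorem exists_addLe_XInd_inter_eq_empty (hμ : ℵ₀ ≤ μ)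
    (hfresh : ∀ Y : Set S, (∀ᶠ x in l, x ∉ Y) → ∀ P : Set T, #P < μ → ∃ α ∉ P, g α ∩ Y = ∅)
    (p : AddCond μ T) {Y : Set S} (hY : ∀ᶠ x in l, x ∉ Y) :
    ∃ q, AddLe q p ∧ XInd g q ∩ Y = ∅ := by
  obtain ⟨α, hα, hαY⟩ := hfresh Y hY p.neg p.negSmall
  have h₁ : Disjoint p.pos (single hμ α).neg := by simp [single, ofFinite]
  have h₂ : Disjoint (single hμ α).pos p.neg := by simpa [single, ofFinite] using hα
  refine ⟨sup hμ p (single hμ α) h₁ h₂, le_sup_left, ?_⟩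
  rw [XInd_sup, XInd_single, inter_assoc, hαY, inter_empty]

theorem densityIdeal_eq (hμ : ℵ₀ ≤ μ) (he : IsDenseEmbeddingMod l e)
    (hg : ∀ p, XInd g p =ᶠ[l] e p)
    (hfresh : ∀ Y : Set S, (∀ᶠ x in l, x ∉ Y) → ∀ P : Set T, #P < μ → ∃ α ∉ P, g α ∩ Y = ∅) :
    densityIdeal μ g = {Y | ∀ᶠ x in l, x ∉ Y} := by
  ext Y
  refine ⟨fun hY => ?_, fun hY p => exists_addLe_XInd_inter_eq_empty hμ hfresh p hY⟩
  by_contra hYl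
  obtain ⟨r, hr⟩ := he.exists_le hYl
  obtain ⟨q, hqr, hq⟩ := hY r
  apply frequently_mem_XInd he hg q
  filter_upwards [(hg q).le, he.le_of_addLe hqr, hr] with x h₁ h₂ h₃ hx
  exact hq.subset ⟨hx, h₃ (h₂ (h₁ hx))⟩

theorem exists_addLe_XInd_inter_eq_empty_or_subset (hμ : ℵ₀ ≤ μ) (he : IsDenseEmbeddingMod l e)
    (hg : ∀ p, XInd g p =ᶠ[l] e p)
    (hfresh : ∀ Y : Set S, (∀ᶠ x in l, x ∉ Y) → ∀ P : Set T, #P < μ → ∃ α ∉ P, g α ∩ Y = ∅)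
    (p : AddCond μ T) {A : Set S} (hA : A ⊆ XInd g p) :
    ∃ q, AddLe q p ∧ (XInd g q ∩ A = ∅ ∨ XInd g q ⊆ A) := by
  by_cases hAl : ∀ᶠ x in l, x ∉ A
  · obtain ⟨q, hqp, hq⟩ := exists_addLe_XInd_inter_eq_empty hμ hfresh p hAl
    exact ⟨q, hqp, .inl hq⟩
  obtain ⟨r, hr⟩ := he.exists_le hAl
  obtain ⟨s, hsr, hsp⟩ : Compatible r p := by
    by_contra hrp
    apply he.frequently_mem r
    filter_upwards [he.eventually_notMem_inter hrp, hr, (hg p).le] with x h₁ h₂ h₃ hx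
    exact h₁ ⟨hx, h₃ (hA (h₂ hx))⟩
  have hsA : ∀ᶠ x in l, x ∉ XInd g s \ A := by
    filter_upwards [(hg s).le, he.le_of_addLe hsr, hr] with x h₁ h₂ h₃ hx
    exact hx.2 (h₃ (h₂ (h₁ hx.1)))
  obtain ⟨q, hqs, hq⟩ := exists_addLe_XInd_inter_eq_empty hμ hfresh s hsA
  refine ⟨q, hqs.trans hsp, .inr fun x hx => by_contra fun hxA => ?_⟩
  exact hq.subset ⟨hx, XInd_anti hqs hx, hxA⟩

end Representation

theorem exists_cofinal_enumeration {S T : Type u} {μ : Cardinal.{u}} {l : Filter S}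
    [CardinalInterFilter l μ] [l.NeBot] (hμ : ℵ₀ ≤ μ) (hpt : ∀ x, ∀ᶠ y in l, y ≠ x)
    {J : Set (Set S)} (hJ : ∀ Z ∈ J, ∀ᶠ x in l, x ∉ Z)
    (hJcof : ∀ Y : Set S, (∀ᶠ x in l, x ∉ Y) → ∃ Z ∈ J, Y ⊆ Z) (hJT : #J ≤ #T) :
    ∃ f : T → Set S, (∀ α, ∀ᶠ x in l, x ∉ f α) ∧
      ∀ Y : Set S, (∀ᶠ x in l, x ∉ Y) → ∀ P : Set T, #P < μ → ∃ α ∉ P, Y ⊆ f α := by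
  have hμJ : μ ≤ #J := le_mk_of_forall_exists_mem hJ fun x =>
    (hJcof {x} (hpt x)).imp fun _ ⟨hZ, hxZ⟩ => ⟨hZ, hxZ rfl⟩
  have : Nonempty J := mk_ne_zero_iff.1 (hμJ.trans_lt' (aleph0_pos.trans_le hμ)).ne'
  obtain ⟨f, hf⟩ := exists_forall_exists_notMem_eq (hμ.trans (hμJ.trans hJT)) hJT (hμJ.trans hJT)
  refine ⟨fun α => f α, fun α => hJ _ (f α).2, fun Y hY P hP => ?_⟩
  obtain ⟨Z, hZ, hYZ⟩ := hJcof Y hY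
  obtain ⟨α, hαP, hαZ⟩ := hf ⟨Z, hZ⟩ P hP
  exact ⟨α, hαP, by simpa [hαZ] using hYZ⟩

/-- Suppose `μ` is regular and `I` is a `μ`-complete ideal on `κ`
containing all sets of size `< κ`, such that `Add(μ,θ)` embeds densely into
`𝒫(κ)/I` and some `J ⊆ I` of cardinality `≤ θ` is `⊆`-cofinal in `I`.  Then there
is a `(μ,κ)`-densely maximal independent family of cardinality `θ` (given by an
injective enumeration `g`) whose density ideal is exactly `I`; in particular
`θ ∈ sp_𝔦(μ,κ)`. -/
theorem stmt_8 {T : Type u} {S : Type u} (μ θ : Cardinal.{u}) (hμ : μ.IsRegular)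
    (hθ : #T = θ) (hinf : Cardinal.aleph0 ≤ #S)
    (I : Set (Set S))
    (hdown : ∀ Y Z : Set S, Y ∈ I → Z ⊆ Y → Z ∈ I)
    (hcomplete : ∀ 𝒴 : Set (Set S), 𝒴 ⊆ I → #𝒴 < μ → ⋃₀ 𝒴 ∈ I)
    (hsmall : ∀ Y : Set S, #Y < #S → Y ∈ I)
    (hproper : (Set.univ : Set S) ∉ I)
    (e : AddCond μ T → Set S)
    (hepos : ∀ p, e p ∉ I)
    (heord : ∀ p q, AddLe q p → e q \ e p ∈ I)
    (heinc : ∀ p q, (¬∃ r : AddCond μ T, AddLe r p ∧ AddLe r q) → e p ∩ e q ∈ I)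
    (hedense : ∀ Y : Set S, Y ∉ I → ∃ p, e p \ Y ∈ I)
    (J : Set (Set S)) (hJI : J ⊆ I) (hJcard : #J ≤ θ)
    (hJcof : ∀ Y ∈ I, ∃ Z ∈ J, Y ⊆ Z) :
    ∃ g : T → Set S, Function.Injective g ∧
      (∀ p : AddCond μ T, #(XInd g p) = #S) ∧
      (∀ p : AddCond μ T, ∀ A ⊆ XInd g p, ∃ q : AddCond μ T,
        AddLe q p ∧ (XInd g q ∩ A = ∅ ∨ XInd g q ⊆ A)) ∧
      densityIdeal μ g = I := by
  have hμ₀ : ℵ₀ ≤ μ := hμ.aleph0_le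
  let l : Filter S := ofCardinalUnion I (natCast_lt_aleph0.trans_le hμ₀)
    (fun 𝒴 h𝒴 h𝒴I => hcomplete 𝒴 h𝒴I h𝒴) (fun Y hY Z hZY => hdown Y Z hY hZY)
  have hI : ∀ Y, (∀ᶠ x in l, x ∉ Y) ↔ Y ∈ I := fun _ =>
    eventually_notMem_ofCardinalUnion_iff
  have hIle : ∀ A B : Set S, A \ B ∈ I → A ≤ᶠ[l] B := fun _ _ h =>
    eventuallyLE_iff_eventually_notMem_sdiff.2 ((hI _).2 h)
  have he : IsDenseEmbeddingMod l e :=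
    { frequently_mem := fun p => mt (hI _).1 (hepos p)
      le_of_addLe := fun h => hIle _ _ (heord _ _ h)
      eventually_notMem_inter := fun h => (hI _).2 (heinc _ _ h)
      exists_le := fun hY => (hedense _ (mt (hI _).2 hY)).imp fun _ => hIle _ _ }
  have : l.NeBot := ⟨fun h => hproper ((hI _).1 (by simp [h]))⟩
  obtain ⟨f, hfI, hf⟩ := exists_cofinal_enumeration (T := T) hμ₀
    (fun x => (hI _).2 (hsmall {x} (by simpa using one_lt_aleph0.trans_le hinf)))
    (fun Z hZ => (hI Z).2 (hJI hZ)) (fun Y hY => hJcof Y ((hI Y).1 hY)) (hθ ▸ hJcard)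
  let g : T → Set S := fun α => e (single hμ₀ α) \ f α
  have hg := he.XInd_diff_eventuallyEq hμ₀ hfI
  have hfresh : ∀ Y : Set S, (∀ᶠ x in l, x ∉ Y) → ∀ P : Set T, #P < μ → ∃ α ∉ P, g α ∩ Y = ∅ :=
    fun Y hY P hP => (hf Y hY P hP).imp fun _ ⟨hαP, hYf⟩ =>
      ⟨hαP, disjoint_iff_inter_eq_empty.1 (disjoint_sdiff_left.mono_right hYf)⟩
  refine ⟨g, injective_of_XInd_eventuallyEq hμ₀ he hg,
    mk_XInd he hg fun Y h => (hI Y).2 (hsmall Y h),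
    fun p A hA => exists_addLe_XInd_inter_eq_empty_or_subset hμ₀ he hg hfresh p hA, ?_⟩
  rw [densityIdeal_eq hμ₀ he hg hfresh]
  exact Set.ext hI
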